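/- Let X be a second countable, locally compact topological space such that every nonempty open subspace of X is non-discrete. Then the set of all d ∈ Met(X) such that for every nonempty open subset U of X the metric space (U, d|_{U²}) is not doubling is a dense G_δ subset of Met(X). -/

import Mathlib

open scoped ENNReal

/-- The distance function of a bundled metric-space structure. -/
noncomputable def mdist {X : Type*} (m : MetricSpace X) (x y : X) : ℝ :=
  m.toDist.dist x y

/-- `Met(X)`: the set of metrics (bundled metric-space structures) on `X` that induce
the given topology of `X`. -/
def MetricsOn (X : Type*) [t : TopologicalSpace X] : Set (MetricSpace X) :=
  { m | m.toUniformSpace.toTopologicalSpace = t }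

/-- The extended sup-metric `D_X` on metrics on `X`. -/
noncomputable def metD {X : Type*} (d e : MetricSpace X) : ℝ≥0∞ :=
  ⨆ p : X × X, ENNReal.ofReal |mdist d p.1 p.2 - mdist e p.1 p.2|

/-- The space `Met(X)` of metrics on `X` compatible with its topology. -/
def Met (X : Type*) [TopologicalSpace X] : Type _ :=
  { m : MetricSpace X // m ∈ MetricsOn X }

/-- The topology on `Met(X)` generated by the extended metric `D_X`, i.e. generated by the
open balls of `D_X`. -/
instance Met.topologicalSpace (X : Type*) [TopologicalSpace X] : TopologicalSpace (Met X) :=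
  TopologicalSpace.generateFrom
    { U | ∃ (d : Met X) (ε : ℝ≥0∞), 0 < ε ∧ U = { e : Met X | metD d.1 e.1 < ε } }

/-- `δ_d(A)`: the diameter of `A` with respect to the metric `m`. -/
noncomputable def setDiam {X : Type*} (m : MetricSpace X) (A : Set X) : ℝ :=
  @Metric.diam X m.toPseudoMetricSpace A

/-- `α_d(A) = inf { d(x,y) : x, y ∈ A, x ≠ y }`. -/
noncomputable def setSep {X : Type*} (m : MetricSpace X) (A : Set X) : ℝ :=
  sInf { r : ℝ | ∃ x ∈ A, ∃ y ∈ A, x ≠ y ∧ r = mdist m x y }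

/-- The metric subspace `(U, d|_{U²})` of `(X, m)` is doubling: there are `C, α > 0` such
that every finite subset `A ⊆ U` with at least two points satisfies
`card A ≤ C (δ(A)/α(A))^α`.  (This is exactly the doubling property of the metric space `U`
with the restricted metric, since both `δ` and `α` are computed from `m`.) -/
def IsDoublingOn {X : Type*} (m : MetricSpace X) (U : Set X) : Prop :=
  ∃ C : ℝ, 0 < C ∧ ∃ α : ℝ, 0 < α ∧ ∀ A : Finset X, ↑A ⊆ U → 2 ≤ A.card →
    (A.card : ℝ) ≤ C * (setDiam m ↑A / setSep m ↑A) ^ α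

/-!
The `Gδ` part: `d` is not doubling on `U` iff for every `k` some finite `A ⊆ U` with at least
two points has `(k + 1) (δ(A)/α(A))^(k + 1) > card A`. For a fixed `A` this is an open condition,
because `δ(A)` and `α(A)` are `1`-Lipschitz in the metric for `D_X`, and only the countably
many `U` of a basis need to be tested.

Density: given `d` and `ε`, choose clusters `A k` of `k + 2` points, inside basic open sets that
each recur infinitely often, with `d`-diameters `B k` decreasing so fast that
`4 B (k + 1) ≤ α_d(A k)`. Gluing, one cluster after another, every two points of `A k` at
distance `σ k = α_d(A k)` lowers the distance by at most `B k` at step `k`; the limit is a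
compatible metric within `2 B 0` of `d` in which each cluster has diameter at most twice its
separation, so no nonempty open set is doubling.
-/

open Filter Topology

section MetTopology

variable {X : Type*}

lemma metD_self (d : MetricSpace X) : metD d d = 0 := by
  simp [metD]

lemma ofReal_abs_sub_le_metD (d e : MetricSpace X) (x y : X) :
    ENNReal.ofReal |mdist d x y - mdist e x y| ≤ metD d e :=
  le_iSup (fun p : X × X => ENNReal.ofReal |mdist d p.1 p.2 - mdist e p.1 p.2|) (x, y)

lemma abs_sub_lt_of_metD_lt {d e : MetricSpace X} {t : ℝ} (h : metD d e < ENNReal.ofReal t)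
    (x y : X) : |mdist d x y - mdist e x y| < t :=
  (ENNReal.ofReal_lt_ofReal_iff'.1 ((ofReal_abs_sub_le_metD d e x y).trans_lt h)).1

lemma metD_le_ofReal {d e : MetricSpace X} {t : ℝ}
    (h : ∀ x y, |mdist d x y - mdist e x y| ≤ t) : metD d e ≤ ENNReal.ofReal t :=
  iSup_le fun p => ENNReal.ofReal_le_ofReal (h p.1 p.2)

lemma metD_triangle (a b c : MetricSpace X) : metD a c ≤ metD a b + metD b c := by
  refine iSup_le fun p => ?_
  calc ENNReal.ofReal |mdist a p.1 p.2 - mdist c p.1 p.2|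
      ≤ ENNReal.ofReal (|mdist a p.1 p.2 - mdist b p.1 p.2| +
          |mdist b p.1 p.2 - mdist c p.1 p.2|) := ENNReal.ofReal_le_ofReal (abs_sub_le _ _ _)
    _ ≤ ENNReal.ofReal |mdist a p.1 p.2 - mdist b p.1 p.2| +
          ENNReal.ofReal |mdist b p.1 p.2 - mdist c p.1 p.2| := ENNReal.ofReal_add_le
    _ ≤ metD a b + metD b c :=
        add_le_add (ofReal_abs_sub_le_metD a b _ _) (ofReal_abs_sub_le_metD b c _ _)

variable [TopologicalSpace X]

theorem Met.isOpen_setOf_metD_lt (d : Met X) {ε : ℝ≥0∞} (hε : 0 < ε) :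
    IsOpen { e : Met X | metD d.1 e.1 < ε } :=
  TopologicalSpace.isOpen_generateFrom_of_mem ⟨d, ε, hε, rfl⟩

theorem Met.isOpen_iff {O : Set (Met X)} :
    IsOpen O ↔ ∀ d ∈ O, ∃ ε > 0, ∀ e : Met X, metD d.1 e.1 < ε → e ∈ O := by
  constructor
  · intro hO
    induction hO with
    | basic V hV =>
      obtain ⟨c, δ, -, rfl⟩ := hV
      intro d (hcd : metD c.1 d.1 < δ)
      refine ⟨δ - metD c.1 d.1, tsub_pos_of_lt hcd, fun e he => ?_⟩
      calc metD c.1 e.1 ≤ metD c.1 d.1 + metD d.1 e.1 := metD_triangle _ _ _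
        _ < metD c.1 d.1 + (δ - metD c.1 d.1) := ENNReal.add_lt_add_left hcd.ne_top he
        _ = δ := add_tsub_cancel_of_le hcd.le
    | univ => exact fun _ _ => ⟨1, one_pos, fun _ _ => trivial⟩
    | inter U V _ _ hU hV =>
      rintro d ⟨hdU, hdV⟩
      obtain ⟨ε₁, hε₁, h₁⟩ := hU d hdU
      obtain ⟨ε₂, hε₂, h₂⟩ := hV d hdV
      exact ⟨min ε₁ ε₂, lt_min hε₁ hε₂, fun e he =>
        ⟨h₁ e (he.trans_le (min_le_left _ _)), h₂ e (he.trans_le (min_le_right _ _))⟩⟩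
    | sUnion S _ ih =>
      rintro d ⟨V, hV, hdV⟩
      obtain ⟨ε, hε, h⟩ := ih V hV d hdV
      exact ⟨ε, hε, fun e he => ⟨V, hV, h e he⟩⟩
  · intro h
    choose ε hε hsub using h
    have hO : O = ⋃ (d : Met X) (hd : d ∈ O), { e : Met X | metD d.1 e.1 < ε d hd } := by
      refine Set.Subset.antisymm (fun d hd => ?_) (Set.iUnion₂_subset hsub)
      exact Set.mem_iUnion₂.2 ⟨d, hd, show metD d.1 d.1 < _ by rw [metD_self]; exact hε d hd⟩
    rw [hO]
    exact isOpen_iUnion fun d => isOpen_iUnion fun hd => Met.isOpen_setOf_metD_lt d (hε d hd)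

theorem Met.continuous_of_abs_sub_le {g : Met X → ℝ}
    (hg : ∀ d e : Met X, ∀ t : ℝ, 0 < t → (∀ x y, |mdist d.1 x y - mdist e.1 x y| ≤ t) →
      |g d - g e| ≤ t) :
    Continuous g := by
  refine continuous_def.2 fun O hO => ?_
  refine Met.isOpen_iff.2 fun d hd => ?_
  obtain ⟨r, hr, hball⟩ := Metric.isOpen_iff.1 hO (g d) hd
  refine ⟨ENNReal.ofReal (r / 2), by simpa using hr, fun e he => hball ?_⟩
  have := hg d e _ (half_pos hr) fun x y => (abs_sub_lt_of_metD_lt he x y).le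
  rw [Metric.mem_ball, Real.dist_eq, abs_sub_comm]
  linarith

end MetTopology

section DiamSep

variable {X : Type*} (m : MetricSpace X) (A : Finset X)

lemma mdist_le_setDiam {x y : X} (hx : x ∈ A) (hy : y ∈ A) : mdist m x y ≤ setDiam m A :=
  @Metric.dist_le_diam_of_mem X _ _ _ m.toPseudoMetricSpace A.finite_toSet.isBounded hx hy

lemma setDiam_le {c : ℝ} (hc : 0 ≤ c) (h : ∀ x ∈ A, ∀ y ∈ A, mdist m x y ≤ c) :
    setDiam m A ≤ c :=
  @Metric.diam_le_of_forall_dist_le X _ m.toPseudoMetricSpace _ hc h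

lemma setSep_le {x y : X} (hx : x ∈ A) (hy : y ∈ A) (hxy : x ≠ y) :
    setSep m A ≤ mdist m x y :=
  csInf_le ⟨0, by rintro r ⟨x, -, y, -, -, rfl⟩; exact @dist_nonneg X m.toPseudoMetricSpace x y⟩
    ⟨x, hx, y, hy, hxy, rfl⟩

variable {A}

lemma le_setSep (hA : 1 < A.card) {c : ℝ} (h : ∀ x ∈ A, ∀ y ∈ A, x ≠ y → c ≤ mdist m x y) :
    c ≤ setSep m A := by
  obtain ⟨x, hx, y, hy, hxy⟩ := Finset.one_lt_card.1 hA
  refine le_csInf ⟨_, x, hx, y, hy, hxy, rfl⟩ ?_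
  rintro r ⟨x, hx, y, hy, hxy, rfl⟩
  exact h x hx y hy hxy

lemma setSep_pos (hA : 1 < A.card) : 0 < setSep m A := by
  classical
  obtain ⟨x, hx, y, hy, hxy⟩ := Finset.one_lt_card.1 hA
  have hoff : A.offDiag.Nonempty := ⟨(x, y), Finset.mem_offDiag.2 ⟨hx, hy, hxy⟩⟩
  obtain ⟨p, hp, hmin⟩ := A.offDiag.exists_mem_eq_inf' hoff fun p => mdist m p.1 p.2
  rw [Finset.mem_offDiag] at hp
  have hp_pos : 0 < mdist m p.1 p.2 := (@dist_pos X m _ _).2 hp.2.2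
  refine hp_pos.trans_le (le_setSep m hA fun x hx y hy hxy => ?_)
  rw [← hmin]
  exact Finset.inf'_le (fun p => mdist m p.1 p.2) (s := A.offDiag) (b := (x, y))
    (Finset.mem_offDiag.2 ⟨hx, hy, hxy⟩)

lemma setSep_le_setDiam (hA : 1 < A.card) : setSep m A ≤ setDiam m A := by
  obtain ⟨x, hx, y, hy, hxy⟩ := Finset.one_lt_card.1 hA
  exact (setSep_le m A hx hy hxy).trans (mdist_le_setDiam m A hx hy)

lemma one_le_setDiam_div_setSep (hA : 1 < A.card) : 1 ≤ setDiam m A / setSep m A :=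
  (one_le_div (setSep_pos m hA)).2 (setSep_le_setDiam m hA)

end DiamSep

section Doubling

variable {X : Type*} {m : MetricSpace X}

lemma IsDoublingOn.mono {U V : Set X} (h : IsDoublingOn m U) (hVU : V ⊆ U) :
    IsDoublingOn m V := by
  obtain ⟨C, hC, α, hα, hbound⟩ := h
  exact ⟨C, hC, α, hα, fun A hAV hA => hbound A (hAV.trans hVU) hA⟩

theorem not_isDoublingOn_iff {U : Set X} :
    ¬IsDoublingOn m U ↔ ∀ k : ℕ, ∃ A : Finset X, ↑A ⊆ U ∧ 2 ≤ A.card ∧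
      ((k : ℝ) + 1) * (setDiam m A / setSep m A) ^ ((k : ℝ) + 1) < A.card := by
  constructor
  · intro h k
    by_contra! hk
    exact h ⟨k + 1, by positivity, k + 1, by positivity, hk⟩
  · rintro h ⟨C, hC, α, hα, hbound⟩
    obtain ⟨k, hk⟩ := exists_nat_ge (max C α)
    obtain ⟨A, hAU, hA, hlt⟩ := h k
    have h1 : 1 ≤ setDiam m A / setSep m A := one_le_setDiam_div_setSep m hA
    have hCk : C ≤ (k : ℝ) + 1 := by linarith [le_max_left C α]
    have hαk : α ≤ (k : ℝ) + 1 := by linarith [le_max_right C α]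
    have := mul_le_mul hCk (Real.rpow_le_rpow_of_exponent_le h1 hαk) (by positivity)
      (by positivity)
    linarith [hbound A hAU hA]

theorem not_isDoublingOn_of_forall_exists_setDiam_le {U : Set X}
    (h : ∀ N : ℕ, ∃ A : Finset X, ↑A ⊆ U ∧ N ≤ A.card ∧ 2 ≤ A.card ∧
      setDiam m A ≤ 2 * setSep m A) :
    ¬IsDoublingOn m U := by
  rintro ⟨C, hC, α, hα, hbound⟩
  obtain ⟨A, hAU, hN, hA, hratio⟩ := h (⌈C * 2 ^ α⌉₊ + 1)
  have hr : (setDiam m A / setSep m A) ^ α ≤ 2 ^ α :=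
    Real.rpow_le_rpow (zero_le_one.trans (one_le_setDiam_div_setSep m hA))
      ((div_le_iff₀ (setSep_pos m hA)).2 hratio) hα.le
  have hcard : C * 2 ^ α < A.card :=
    (Nat.le_ceil _).trans_lt (by exact_mod_cast Nat.lt_of_succ_le hN)
  nlinarith [hbound A hAU hA]

end Doubling

section Gdelta

variable {X : Type*}

lemma setDiam_le_setDiam_add {d e : MetricSpace X} {A : Finset X} {t : ℝ} (ht : 0 ≤ t)
    (h : ∀ x y, mdist e x y ≤ mdist d x y + t) : setDiam e A ≤ setDiam d A + t :=
  setDiam_le e A (add_nonneg (@Metric.diam_nonneg X _ d.toPseudoMetricSpace) ht)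
    fun x hx y hy => (h x y).trans (by linarith [mdist_le_setDiam d A hx hy])

lemma abs_setDiam_sub_setDiam_le {d e : MetricSpace X} {A : Finset X} {t : ℝ} (ht : 0 ≤ t)
    (h : ∀ x y, |mdist d x y - mdist e x y| ≤ t) : |setDiam d A - setDiam e A| ≤ t := by
  rw [abs_sub_le_iff]
  constructor
  · linarith [setDiam_le_setDiam_add (d := e) (e := d) (A := A) ht
      fun x y => by linarith [(abs_le.1 (h x y)).2]]
  · linarith [setDiam_le_setDiam_add (d := d) (e := e) (A := A) ht
      fun x y => by linarith [(abs_le.1 (h x y)).1]]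

lemma setSep_sub_le_setSep {d e : MetricSpace X} {A : Finset X} (hA : 1 < A.card) {t : ℝ}
    (h : ∀ x y, mdist d x y ≤ mdist e x y + t) : setSep d A - t ≤ setSep e A :=
  le_setSep e hA fun x hx y hy hxy => by linarith [setSep_le d A hx hy hxy, h x y]

lemma abs_setSep_sub_setSep_le {d e : MetricSpace X} {A : Finset X} (hA : 1 < A.card) {t : ℝ}
    (h : ∀ x y, |mdist d x y - mdist e x y| ≤ t) : |setSep d A - setSep e A| ≤ t := by
  rw [abs_sub_le_iff]
  constructor
  · linarith [setSep_sub_le_setSep (d := d) (e := e) hA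
      fun x y => by linarith [(abs_le.1 (h x y)).2]]
  · linarith [setSep_sub_le_setSep (d := e) (e := d) hA
      fun x y => by linarith [(abs_le.1 (h x y)).1]]

variable [TopologicalSpace X]

theorem Met.continuous_setDiam (A : Finset X) : Continuous fun d : Met X => setDiam d.1 A :=
  Met.continuous_of_abs_sub_le fun _ _ _ ht h => abs_setDiam_sub_setDiam_le ht.le h

theorem Met.continuous_setSep {A : Finset X} (hA : 1 < A.card) :
    Continuous fun d : Met X => setSep d.1 A :=
  Met.continuous_of_abs_sub_le fun _ _ _ _ h => abs_setSep_sub_setSep_le hA h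

theorem Met.isGδ_setOf_not_isDoublingOn (U : Set X) :
    IsGδ { d : Met X | ¬IsDoublingOn d.1 U } := by
  simp_rw [not_isDoublingOn_iff, Set.ofPred_forall]
  refine IsGδ.iInter_of_isOpen fun k => ?_
  simp_rw [Set.ofPred_exists]
  refine isOpen_iUnion fun A => ?_
  by_cases hA : ↑A ⊆ U ∧ 2 ≤ A.card
  · simp only [hA, true_and]
    have hsep := Met.continuous_setSep (X := X) hA.2
    refine isOpen_lt (continuous_const.mul (Continuous.rpow_const
      ((Met.continuous_setDiam A).div hsep fun d => (setSep_pos d.1 hA.2).ne') fun _ => ?_))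
      continuous_const
    exact Or.inr (by positivity)
  · simp only [← and_assoc, hA, false_and, Set.ofPred_false, isOpen_empty]

theorem Met.isGδ_setOf_forall_not_isDoublingOn [SecondCountableTopology X] :
    IsGδ { d : Met X | ∀ U : Set X, IsOpen U → U.Nonempty → ¬IsDoublingOn d.1 U } := by
  obtain ⟨b, hbc, hbne, hb⟩ := TopologicalSpace.exists_countable_basis X
  have : { d : Met X | ∀ U : Set X, IsOpen U → U.Nonempty → ¬IsDoublingOn d.1 U } =
      ⋂ V ∈ b, { d : Met X | ¬IsDoublingOn d.1 V } := by
    ext d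
    simp only [Set.mem_ofPred_eq, Set.mem_iInter]
    refine ⟨fun hd V hV => hd V (hb.isOpen hV) (Set.nonempty_iff_ne_empty.2 fun h => hbne (h ▸ hV)),
      fun hd U hU ⟨x, hx⟩ hdU => ?_⟩
    obtain ⟨V, hV, -, hVU⟩ := hb.exists_subset_of_mem_open hx hU
    exact hd V hV (hdU.mono hVU)
  rw [this]
  exact IsGδ.biInter hbc fun V _ => Met.isGδ_setOf_not_isDoublingOn V

end Gdelta

theorem exists_finset_subset_card_eq_dist_lt {X : Type*} [MetricSpace X] {W : Set X}
    (hW : ¬DiscreteTopology W) (N : ℕ) {r : ℝ} (hr : 0 < r) :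
    ∃ A : Finset X, ↑A ⊆ W ∧ A.card = N ∧ ∀ a ∈ A, ∀ b ∈ A, dist a b < r := by
  obtain ⟨x, hx⟩ : ∃ x : W, 𝓝[≠] x ≠ ⊥ := by
    simpa [discreteTopology_iff_nhds_ne] using hW
  have : (𝓝[≠] x).NeBot := ⟨hx⟩
  have hinf : (Subtype.val ⁻¹' Metric.ball x.1 (r / 2) : Set W).Infinite :=
    infinite_of_mem_nhds x (Metric.isOpen_ball.preimage continuous_subtype_val |>.mem_nhds
      (Metric.mem_ball_self (half_pos hr)))
  obtain ⟨t, ht, hcard⟩ := hinf.exists_subset_card_eq N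
  refine ⟨t.map (Function.Embedding.subtype _), ?_, by simpa using hcard, ?_⟩
  · simp
  · simp only [Finset.mem_map, Function.Embedding.coe_subtype]
    rintro _ ⟨a, ha, rfl⟩ _ ⟨b, hb, rfl⟩
    have ha' : dist a.1 x.1 < r / 2 := ht ha
    have hb' : dist b.1 x.1 < r / 2 := ht hb
    linarith [dist_triangle_right a.1 b.1 x.1]

theorem exists_seq_isOpen_frequently_subset {X : Type*} [TopologicalSpace X] [SecondCountableTopology X]
    [Nonempty X] :
    ∃ W : ℕ → Set X, (∀ k, IsOpen (W k) ∧ (W k).Nonempty) ∧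
      ∀ U : Set X, IsOpen U → U.Nonempty → ∀ N : ℕ, ∃ k ≥ N, W k ⊆ U := by
  obtain ⟨b, hbc, hbne, hb⟩ := TopologicalSpace.exists_countable_basis X
  have hb_nonempty : b.Nonempty := by
    obtain ⟨x⟩ := ‹Nonempty X›
    obtain ⟨V, hV, -⟩ := hb.exists_subset_of_mem_open (Set.mem_univ x) isOpen_univ
    exact ⟨V, hV⟩
  obtain ⟨V, rfl⟩ := hbc.exists_eq_range hb_nonempty
  refine ⟨fun k => V k.unpair.1, fun k => ⟨hb.isOpen ⟨_, rfl⟩,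
    Set.nonempty_iff_ne_empty.2 fun h => hbne (h ▸ ⟨_, rfl⟩)⟩, ?_⟩
  rintro U hU ⟨x, hx⟩ N
  obtain ⟨_, ⟨n, rfl⟩, -, hVU⟩ := hb.exists_subset_of_mem_open hx hU
  exact ⟨Nat.pair n N, Nat.right_le_pair n N, by simpa [Nat.unpair_pair] using hVU⟩

namespace PseudoMetric

variable {X : Type*}

section Shortcut

variable (f : PseudoMetric X ℝ) {A : Finset X} (hA : A.Nonempty) {σ : ℝ}

noncomputable def jumpCost (σ : ℝ) (x y : X) : ℝ :=
  (A ×ˢ A).inf' (hA.product hA) fun p => f x p.1 + σ + f p.2 y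

lemma jumpCost_le {x y a b : X} (ha : a ∈ A) (hb : b ∈ A) :
    f.jumpCost hA σ x y ≤ f x a + σ + f b y :=
  Finset.inf'_le (fun p : X × X => f x p.1 + σ + f p.2 y) (s := A ×ˢ A) (b := (a, b))
    (Finset.mem_product.2 ⟨ha, hb⟩)

lemma exists_jumpCost_eq (x y : X) :
    ∃ a ∈ A, ∃ b ∈ A, f.jumpCost hA σ x y = f x a + σ + f b y := by
  obtain ⟨p, hp, h⟩ := (A ×ˢ A).exists_mem_eq_inf' (hA.product hA)
    fun p : X × X => f x p.1 + σ + f p.2 y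
  exact ⟨p.1, (Finset.mem_product.1 hp).1, p.2, (Finset.mem_product.1 hp).2, h⟩

lemma le_jumpCost {c : ℝ} {x y : X} (h : ∀ a ∈ A, ∀ b ∈ A, c ≤ f x a + σ + f b y) :
    c ≤ f.jumpCost hA σ x y := by
  obtain ⟨a, ha, b, hb, heq⟩ := f.exists_jumpCost_eq hA x y
  exact heq ▸ h a ha b hb

lemma jumpCost_comm (x y : X) : f.jumpCost hA σ x y = f.jumpCost hA σ y x := by
  have key : ∀ x y, f.jumpCost hA σ y x ≤ f.jumpCost hA σ x y := fun x y => by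
    obtain ⟨a, ha, b, hb, heq⟩ := f.exists_jumpCost_eq hA x y
    rw [heq, f.symm x a, f.symm b y]
    linarith [f.jumpCost_le hA (σ := σ) (x := y) (y := x) hb ha]
  exact le_antisymm (key y x) (key x y)

lemma jumpCost_le_add_left (x y z : X) :
    f.jumpCost hA σ x z ≤ f x y + f.jumpCost hA σ y z := by
  obtain ⟨a, ha, b, hb, heq⟩ := f.exists_jumpCost_eq hA y z
  rw [heq]
  linarith [f.jumpCost_le hA (σ := σ) (x := x) (y := z) ha hb, f.triangle x y a]

lemma jumpCost_le_add_right (x y z : X) :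
    f.jumpCost hA σ x z ≤ f.jumpCost hA σ x y + f y z := by
  obtain ⟨a, ha, b, hb, heq⟩ := f.exists_jumpCost_eq hA x y
  rw [heq]
  linarith [f.jumpCost_le hA (σ := σ) (x := x) (y := z) ha hb, f.triangle b y z]

lemma jumpCost_le_add (hσ : 0 ≤ σ) (x y z : X) :
    f.jumpCost hA σ x z ≤ f.jumpCost hA σ x y + f.jumpCost hA σ y z := by
  obtain ⟨a, ha, b, hb, hab⟩ := f.exists_jumpCost_eq hA x y
  obtain ⟨c, hc, d, hd, hcd⟩ := f.exists_jumpCost_eq hA y z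
  rw [hab, hcd]
  linarith [f.jumpCost_le hA (σ := σ) (x := x) (y := z) ha hd, f.nonneg b y, f.nonneg y c]

/-- The largest pseudometric below `f` in which any two points of `A` are at most `σ` apart. -/
noncomputable def shortcut (hσ : 0 ≤ σ) : PseudoMetric X ℝ where
  toFun x y := min (f x y) (f.jumpCost hA σ x y)
  refl' x := by
    rw [f.refl]
    exact min_eq_left (f.le_jumpCost hA fun a _ b _ => by linarith [f.nonneg x a, f.nonneg b x])
  symm' x y := by rw [f.symm, f.jumpCost_comm]
  triangle' x y z := by
    rw [min_add, add_min, add_min]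
    exact le_min (le_min (min_le_of_left_le (f.triangle x y z))
      (min_le_of_right_le (f.jumpCost_le_add_left hA x y z)))
      (le_min (min_le_of_right_le (f.jumpCost_le_add_right hA x y z))
      (min_le_of_right_le (f.jumpCost_le_add hA hσ x y z)))

variable (hσ : 0 ≤ σ)

lemma shortcut_le (x y : X) : f.shortcut hA hσ x y ≤ f x y := min_le_left _ _

lemma shortcut_le_of_mem {a b : X} (ha : a ∈ A) (hb : b ∈ A) : f.shortcut hA hσ a b ≤ σ :=
  min_le_of_right_le (by simpa using f.jumpCost_le hA (σ := σ) (x := a) (y := b) ha hb)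

lemma le_shortcut {c : ℝ} {x y : X} (hc : c ≤ f x y) (hcσ : c ≤ σ) :
    c ≤ f.shortcut hA hσ x y :=
  le_min hc (f.le_jumpCost hA fun a _ b _ => by linarith [f.nonneg x a, f.nonneg b y])

lemma sub_le_shortcut {B : ℝ} (hB : ∀ a ∈ A, ∀ b ∈ A, f a b ≤ B) (x y : X) :
    f x y - B ≤ f.shortcut hA hσ x y := by
  obtain ⟨a, ha⟩ := hA
  refine le_min (by linarith [hB a ha a ha, f.nonneg a a]) (f.le_jumpCost _ fun a ha b hb => ?_)
  linarith [hB a ha b hb, f.triangle x a y, f.triangle a b y, f.nonneg x a, f.nonneg b y]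

end Shortcut

section Limit

variable {f : ℕ → PseudoMetric X ℝ}

lemma bddBelow_range_apply (f : ℕ → PseudoMetric X ℝ) (x y : X) :
    BddBelow (Set.range fun k => f k x y) :=
  ⟨0, by
    rintro _ ⟨k, rfl⟩
    exact (f k).nonneg x y⟩

lemma tendsto_iInf_of_antitone (hf : Antitone f) (x y : X) :
    Tendsto (fun k => f k x y) atTop (𝓝 (⨅ k, f k x y)) :=
  tendsto_atTop_ciInf (fun _ _ hkl => hf hkl x y) (bddBelow_range_apply f x y)

-- Antitonicity makes the infimum a limit, through which the triangle inequality passes.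
noncomputable def iInfOfAntitone (f : ℕ → PseudoMetric X ℝ) (hf : Antitone f) :
    PseudoMetric X ℝ where
  toFun x y := ⨅ k, f k x y
  refl' x := by simp
  symm' x y := by simp only [(f _).symm x y]
  triangle' x y z := le_of_tendsto_of_tendsto' (tendsto_iInf_of_antitone hf x z)
    ((tendsto_iInf_of_antitone hf x y).add (tendsto_iInf_of_antitone hf y z))
    fun k => (f k).triangle x y z

lemma iInfOfAntitone_le (hf : Antitone f) (k : ℕ) (x y : X) :
    iInfOfAntitone f hf x y ≤ f k x y :=
  ciInf_le (bddBelow_range_apply f x y) k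

lemma le_iInfOfAntitone (hf : Antitone f) {c : ℝ} {x y : X} (h : ∀ k, c ≤ f k x y) :
    c ≤ iInfOfAntitone f hf x y :=
  le_ciInf h

end Limit

end PseudoMetric

/-- Each cluster `A k`, of diameter at most `B k`, is to be made equilateral with side `σ k`.
Since `4 B (k + 1) ≤ σ k`, later clusters are too small to disturb earlier ones. -/
structure ClusterScales (X : Type*) [MetricSpace X] where
  A : ℕ → Finset X
  σ : ℕ → ℝ
  B : ℕ → ℝ
  one_lt_card (k : ℕ) : 1 < (A k).card
  σ_pos (k : ℕ) : 0 < σ k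
  σ_le_dist (k : ℕ) : ∀ a ∈ A k, ∀ b ∈ A k, a ≠ b → σ k ≤ dist a b
  dist_le_B (k : ℕ) : ∀ a ∈ A k, ∀ b ∈ A k, dist a b ≤ B k
  B_succ_le_half (k : ℕ) : B (k + 1) ≤ B k / 2
  four_mul_B_succ_le (k : ℕ) : 4 * B (k + 1) ≤ σ k

namespace ClusterScales

variable {X : Type*} [MetricSpace X] (S : ClusterScales X)

lemma nonempty (k : ℕ) : (S.A k).Nonempty :=
  Finset.card_pos.1 (zero_lt_one.trans (S.one_lt_card k))

lemma σ_le_B (k : ℕ) : S.σ k ≤ S.B k := by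
  obtain ⟨a, ha, b, hb, hab⟩ := Finset.one_lt_card.1 (S.one_lt_card k)
  exact (S.σ_le_dist k a ha b hb hab).trans (S.dist_le_B k a ha b hb)

lemma B_pos (k : ℕ) : 0 < S.B k := (S.σ_pos k).trans_le (S.σ_le_B k)

lemma B_antitone : Antitone S.B :=
  antitone_nat_of_succ_le fun k => by linarith [S.B_succ_le_half k, S.B_pos k]

lemma σ_antitone : Antitone S.σ :=
  antitone_nat_of_succ_le fun k => by
    linarith [S.σ_le_B (k + 1), S.four_mul_B_succ_le k, S.σ_pos k]

lemma four_mul_B_le_σ {i k : ℕ} (hik : i < k) : 4 * S.B k ≤ S.σ i := by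
  linarith [S.B_antitone (Nat.succ_le_of_lt hik), S.four_mul_B_succ_le i]

lemma B_le_mul_pow (k : ℕ) : S.B k ≤ S.B 0 * (1 / 2) ^ k := by
  induction k with
  | zero => simp
  | succ k ih =>
    rw [pow_succ]
    linarith [S.B_succ_le_half k]

lemma exists_B_le {r : ℝ} (hr : 0 < r) : ∃ k, S.B k ≤ r := by
  obtain ⟨k, hk⟩ := exists_pow_lt_of_lt_one (div_pos hr (S.B_pos 0)) (by norm_num : (1 / 2 : ℝ) < 1)
  refine ⟨k, (S.B_le_mul_pow k).trans ?_⟩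
  rw [lt_div_iff₀ (S.B_pos 0)] at hk
  linarith

noncomputable def approx (S : ClusterScales X) : ℕ → PseudoMetric X ℝ
  | 0 => ⟨dist, dist_self, dist_comm, dist_triangle⟩
  | k + 1 => (S.approx k).shortcut (S.nonempty k) (S.σ_pos k).le

lemma approx_antitone : Antitone S.approx :=
  antitone_nat_of_succ_le fun _ => PseudoMetric.shortcut_le _ _ _

lemma approx_le_dist (k : ℕ) (x y : X) : S.approx k x y ≤ dist x y :=
  S.approx_antitone (Nat.zero_le k) x y

lemma approx_sub_B_le_approx_succ (k : ℕ) (x y : X) :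
    S.approx k x y - S.B k ≤ S.approx (k + 1) x y :=
  PseudoMetric.sub_le_shortcut _ _ _
    (fun a ha b hb => (S.approx_le_dist k a b).trans (S.dist_le_B k a ha b hb)) x y

lemma approx_sub_le_approx {k l : ℕ} (hkl : k ≤ l) (x y : X) :
    S.approx k x y - 2 * S.B k + 2 * S.B l ≤ S.approx l x y := by
  induction l, hkl using Nat.le_induction with
  | base => linarith
  | succ l _ ih => linarith [S.approx_sub_B_le_approx_succ l x y, S.B_succ_le_half l]

lemma le_approx {c : ℝ} {x y : X} (hc : c ≤ dist x y) (k : ℕ) (hσ : ∀ i < k, c ≤ S.σ i) :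
    c ≤ S.approx k x y := by
  induction k with
  | zero => exact hc
  | succ k ih =>
    exact PseudoMetric.le_shortcut (S.approx k) (S.nonempty k) (S.σ_pos k).le
      (ih fun i hi => hσ i (hi.trans k.lt_succ_self)) (hσ k k.lt_succ_self)

noncomputable def limit : PseudoMetric X ℝ :=
  PseudoMetric.iInfOfAntitone S.approx S.approx_antitone

lemma limit_le_approx (k : ℕ) (x y : X) : S.limit x y ≤ S.approx k x y :=
  PseudoMetric.iInfOfAntitone_le _ k x y

lemma approx_sub_le_limit (k : ℕ) (x y : X) : S.approx k x y - 2 * S.B k ≤ S.limit x y := by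
  refine PseudoMetric.le_iInfOfAntitone _ fun l => ?_
  rcases le_total k l with hkl | hlk
  · linarith [S.approx_sub_le_approx hkl x y, S.B_pos l]
  · linarith [S.approx_antitone hlk x y, S.B_pos k]

lemma limit_le_dist (x y : X) : S.limit x y ≤ dist x y := S.limit_le_approx 0 x y

lemma dist_sub_le_limit (x y : X) : dist x y - 2 * S.B 0 ≤ S.limit x y :=
  S.approx_sub_le_limit 0 x y

lemma limit_le_σ {k : ℕ} {a b : X} (ha : a ∈ S.A k) (hb : b ∈ S.A k) : S.limit a b ≤ S.σ k :=
  (S.limit_le_approx (k + 1) a b).trans (PseudoMetric.shortcut_le_of_mem _ _ _ ha hb)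

lemma half_σ_le_limit {k : ℕ} {a b : X} (ha : a ∈ S.A k) (hb : b ∈ S.A k) (hab : a ≠ b) :
    S.σ k / 2 ≤ S.limit a b := by
  have := S.le_approx (S.σ_le_dist k a ha b hb hab) (k + 1) fun i hi =>
    S.σ_antitone (Nat.le_of_lt_succ hi)
  linarith [S.approx_sub_le_limit (k + 1) a b, S.four_mul_B_succ_le k]

lemma exists_pos_le_limit (r : ℝ) (hr : 0 < r) :
    ∃ s > 0, ∀ x y, r ≤ dist x y → s ≤ S.limit x y := by
  obtain ⟨k, hk⟩ := S.exists_B_le (div_pos hr four_pos)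
  refine ⟨2 * S.B k, by linarith [S.B_pos k], fun x y hxy => ?_⟩
  have := S.le_approx (c := 4 * S.B k) (by linarith) k fun i => S.four_mul_B_le_σ
  linarith [S.approx_sub_le_limit k x y]

theorem exists_subset {W : ℕ → Set X} (hW : ∀ k, ¬DiscreteTopology (W k)) {ε : ℝ}
    (hε : 0 < ε) :
    ∃ S : ClusterScales X, S.B 0 = ε ∧ ∀ k, ↑(S.A k) ⊆ W k ∧ (S.A k).card = k + 2 := by
  choose! F hFW hFcard hFdist using fun k (b : ℝ) (hb : 0 < b) =>
    exists_finset_subset_card_eq_dist_lt (hW k) (k + 2) hb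
  let sep : ℕ → ℝ → ℝ := fun k b => setSep ‹MetricSpace X› (F k b)
  let B : ℕ → ℝ := fun k => Nat.rec ε (fun k b => min (b / 2) (sep k b / 4)) k
  have hB_succ (k : ℕ) : B (k + 1) = min (B k / 2) (sep k (B k) / 4) := rfl
  have hB_pos (k : ℕ) : 0 < B k := by
    induction k with
    | zero => exact hε
    | succ k ih =>
      have := setSep_pos ‹MetricSpace X› (A := F k (B k)) (by rw [hFcard k _ ih]; omega)
      rw [hB_succ]
      positivity
  have hcard (k : ℕ) : 1 < (F k (B k)).card := by rw [hFcard k _ (hB_pos k)]; omega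
  let S : ClusterScales X :=
    { A k := F k (B k)
      σ k := sep k (B k)
      B := B
      one_lt_card := hcard
      σ_pos k := setSep_pos _ (hcard k)
      σ_le_dist _ _ ha _ hb hab := setSep_le _ _ ha hb hab
      dist_le_B k a ha b hb := (hFdist k _ (hB_pos k) a ha b hb).le
      B_succ_le_half k := (hB_succ k).trans_le (min_le_left _ _)
      four_mul_B_succ_le k := by linarith [(hB_succ k).trans_le (min_le_right _ _)] }
  exact ⟨S, rfl, fun k => ⟨hFW k _ (hB_pos k), hFcard k _ (hB_pos k)⟩⟩

end ClusterScales

namespace PseudoMetric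

variable {X : Type*} [MetricSpace X] (F : PseudoMetric X ℝ)

theorem isOpen_iff_forall_lt (hle : ∀ x y, F x y ≤ dist x y)
    (hpos : ∀ r > 0, ∃ s > 0, ∀ x y, r ≤ dist x y → s ≤ F x y) (s : Set X) :
    IsOpen s ↔ ∀ x ∈ s, ∃ δ > 0, ∀ y, F x y < δ → y ∈ s := by
  rw [Metric.isOpen_iff]
  refine forall₂_congr fun x _ => ⟨fun ⟨r, hr, hball⟩ => ?_, fun ⟨δ, hδ, h⟩ => ?_⟩
  · obtain ⟨δ, hδ, hF⟩ := hpos r hr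
    refine ⟨δ, hδ, fun y hy => hball ?_⟩
    rw [Metric.mem_ball, dist_comm]
    by_contra! hxy
    exact (hF x y hxy).not_gt hy
  · refine ⟨δ, hδ, fun y hy => h y ((hle x y).trans_lt ?_)⟩
    rwa [Metric.mem_ball, dist_comm] at hy

theorem eq_of_eq_zero (hpos : ∀ r > 0, ∃ s > 0, ∀ x y, r ≤ dist x y → s ≤ F x y) {x y : X}
    (h : F x y = 0) : x = y := by
  by_contra hxy
  obtain ⟨s, hs, hF⟩ := hpos (dist x y) (dist_pos.2 hxy)
  exact hs.not_ge (h ▸ hF x y le_rfl)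

variable (hle : ∀ x y, F x y ≤ dist x y)
  (hpos : ∀ r > 0, ∃ s > 0, ∀ x y, r ≤ dist x y → s ≤ F x y)

noncomputable abbrev toMetricSpace : MetricSpace X :=
  MetricSpace.ofDistTopology F F.refl F.symm F.triangle (F.isOpen_iff_forall_lt hle hpos)
    fun _ _ => F.eq_of_eq_zero hpos

theorem toMetricSpace_mem_metricsOn : F.toMetricSpace hle hpos ∈ MetricsOn X := rfl

theorem mdist_toMetricSpace (x y : X) : mdist (F.toMetricSpace hle hpos) x y = F x y := rfl

end PseudoMetric

theorem exists_mem_metricsOn_forall_not_isDoublingOn {X : Type*} [MetricSpace X]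
    [SecondCountableTopology X]
    (hX : ∀ U : Set X, IsOpen U → U.Nonempty → ¬DiscreteTopology U) {ε : ℝ} (hε : 0 < ε) :
    ∃ e ∈ MetricsOn X, (∀ x y, |mdist e x y - dist x y| ≤ ε) ∧
      ∀ U : Set X, IsOpen U → U.Nonempty → ¬IsDoublingOn e U := by
  rcases isEmpty_or_nonempty X with hX₀ | hX₀
  · exact ⟨_, rfl, fun x => isEmptyElim x, fun _ _ ⟨x, _⟩ => isEmptyElim x⟩
  obtain ⟨W, hW, hWU⟩ := exists_seq_isOpen_frequently_subset (X := X)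
  obtain ⟨S, hS0, hSW⟩ := ClusterScales.exists_subset (fun k => hX _ (hW k).1 (hW k).2)
    (half_pos hε)
  refine ⟨S.limit.toMetricSpace S.limit_le_dist S.exists_pos_le_limit,
    S.limit.toMetricSpace_mem_metricsOn _ _, fun x y => ?_,
    fun U hU hUne => not_isDoublingOn_of_forall_exists_setDiam_le fun N => ?_⟩
  · rw [PseudoMetric.mdist_toMetricSpace, abs_le]
    constructor <;> linarith [S.limit_le_dist x y, S.dist_sub_le_limit x y]
  · obtain ⟨k, hkN, hkU⟩ := hWU U hU hUne N
    refine ⟨S.A k, (hSW k).1.trans hkU, by have := (hSW k).2; omega, S.one_lt_card k, ?_⟩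
    have hdiam := setDiam_le (S.limit.toMetricSpace S.limit_le_dist S.exists_pos_le_limit) _
      (S.σ_pos k).le fun a ha b hb => S.limit_le_σ ha hb
    have hsep := le_setSep (S.limit.toMetricSpace S.limit_le_dist S.exists_pos_le_limit)
      (S.one_lt_card k) fun a ha b hb hab => S.half_σ_le_limit ha hb hab
    linarith

theorem Met.dense_setOf_forall_not_isDoublingOn {X : Type*} [TopologicalSpace X]
    [SecondCountableTopology X]
    (hX : ∀ U : Set X, IsOpen U → U.Nonempty → ¬DiscreteTopology U) :
    Dense { d : Met X | ∀ U : Set X, IsOpen U → U.Nonempty → ¬IsDoublingOn d.1 U } := by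
  refine dense_iff_inter_open.2 fun O hO ⟨⟨m, hm⟩, hmO⟩ => ?_
  obtain ⟨ε, hε, hball⟩ := Met.isOpen_iff.1 hO _ hmO
  obtain ⟨δ, -, hδ, hδε⟩ := ENNReal.lt_iff_exists_real_btwn.1 hε
  subst hm
  let _ : MetricSpace X := m
  obtain ⟨e, he, hclose, hnd⟩ :=
    exists_mem_metricsOn_forall_not_isDoublingOn hX (ENNReal.ofReal_pos.1 hδ)
  refine ⟨⟨e, he⟩, hball _ ((metD_le_ofReal fun x y => ?_).trans_lt hδε), fun U hU => ?_⟩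
  · rw [abs_sub_comm]
    exact hclose x y
  · exact hnd U hU

theorem locally_non_doubling_dense_Gdelta_general (X : Type*) [TopologicalSpace X]
    [SecondCountableTopology X]
    (hX : ∀ U : Set X, IsOpen U → U.Nonempty → ¬DiscreteTopology U) :
    Dense { d : Met X | ∀ U : Set X, IsOpen U → U.Nonempty → ¬IsDoublingOn d.1 U } ∧
    IsGδ { d : Met X | ∀ U : Set X, IsOpen U → U.Nonempty → ¬IsDoublingOn d.1 U } :=
  ⟨Met.dense_setOf_forall_not_isDoublingOn hX, Met.isGδ_setOf_forall_not_isDoublingOn⟩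

theorem locally_non_doubling_dense_Gdelta (X : Type*) [TopologicalSpace X]
    [TopologicalSpace.MetrizableSpace X] [SecondCountableTopology X]
    [LocallyCompactSpace X]
    (hX : ∀ U : Set X, IsOpen U → U.Nonempty → ¬DiscreteTopology U) :
    Dense { d : Met X | ∀ U : Set X, IsOpen U → U.Nonempty → ¬IsDoublingOn d.1 U } ∧
    IsGδ { d : Met X | ∀ U : Set X, IsOpen U → U.Nonempty → ¬IsDoublingOn d.1 U } :=
  locally_non_doubling_dense_Gdelta_general X hX
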